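/- arXiv:1803.01863 — 9 statements merged into one kernel-verified Lean document; each statement's English description precedes it below -/
import Mathlib

section
/- Part of the four-dimensional index theorem (Cardy form): Let I range over a finite index set, and let G₀ and d_I, 𝔫_I, Δ_I be real numbers. Define logZβ := −[ (π²/3)·G₀ + Σ_I d_I(𝔫_I − 1)F′(Δ_I) ], c_r := −3[ G₀ + Σ_I d_I(𝔫_I − 1)(Δ_I/π − 1)² ], k := −G₀ − Σ_I d_I(𝔫_I − 1), and c_l := c_r − k. Then logZβ = (π²/6)·c_l. -/
open Real

/-- `F′(u) = u²/2 − π u + π²/3`, the derivative of the paper's function `F = g₊`. -/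
noncomputable def Fprime (u : ℝ) : ℝ := u ^ 2 / 2 - π * u + π ^ 2 / 3

/-! `F′` is, up to the constant `π²/6`, a multiple of the square `(u/π − 1)²` that enters `c_r`;
summing this identity against the weights `d_I (𝔫_I − 1)` splits `logZβ` into a `c_r` part and a
`k` part. -/

theorem Fprime_eq_sq (u : ℝ) : Fprime u = π ^ 2 / 2 * (u / π - 1) ^ 2 - π ^ 2 / 6 := by
  unfold Fprime
  field_simp
  ring

theorem sum_mul_Fprime {ι : Type*} (s : Finset ι) (w Δ : ι → ℝ) :
    ∑ i ∈ s, w i * Fprime (Δ i) =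
      π ^ 2 / 2 * ∑ i ∈ s, w i * (Δ i / π - 1) ^ 2 - π ^ 2 / 6 * ∑ i ∈ s, w i := by
  simp only [Fprime_eq_sq, Finset.mul_sum, ← Finset.sum_sub_distrib]
  exact Finset.sum_congr rfl fun i _ => by ring

/-- Part of the four-dimensional index theorem (Cardy form):
`logZβ = (π²/6)·c_l`. -/
theorem stmt0 {ι : Type*} [Fintype ι] (G₀ : ℝ) (d n Δ : ι → ℝ)
    (logZβ cr k cl : ℝ)
    (hlogZ : logZβ = -((π ^ 2 / 3) * G₀ + ∑ i, d i * (n i - 1) * Fprime (Δ i)))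
    (hcr : cr = -3 * (G₀ + ∑ i, d i * (n i - 1) * (Δ i / π - 1) ^ 2))
    (hk : k = -G₀ - ∑ i, d i * (n i - 1))
    (hcl : cl = cr - k) :
    logZβ = π ^ 2 / 6 * cl := by
  rw [hlogZ, hcl, hcr, hk, sum_mul_Fprime]
  ring
end

section
/- c-extremization for twisted N=4 super Yang-Mills: Let N be a real number and 𝔫₁, 𝔫₂, 𝔫₃ real numbers with 𝔫₁+𝔫₂+𝔫₃ = 2 and Θ := 𝔫₁²+𝔫₂²+𝔫₃² − 2(𝔫₁𝔫₂+𝔫₁𝔫₃+𝔫₂𝔫₃) ≠ 0. Define c_r : ℝ² → ℝ by c_r(Δ₁,Δ₂) = −(3(N²−1)/π²)·[Δ₁Δ₂𝔫₃ + Δ₁Δ₃𝔫₂ + Δ₂Δ₃𝔫₁] where Δ₃ := 2π − Δ₁ − Δ₂. Then at the point Δ̄_a = 4π·𝔫_a(𝔫_a−1)/Θ (a = 1,2) both partial derivatives of c_r vanish, one has Δ̄₃ := 2π − Δ̄₁ − Δ̄₂ = 4π·𝔫₃(𝔫₃−1)/Θ, and the extremal value is c_r(Δ̄₁,Δ̄₂)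 = 12(N²−1)·𝔫₁𝔫₂𝔫₃/Θ. -/
/-!
Write `S = Σ 𝔫_a(𝔫_a - 1)`. On the plane `Σ 𝔫_a = 2` one has `Θ = 2S`, so `Δ̄_a = 2π 𝔫_a(𝔫_a - 1)/S`
and the three `Δ̄_a` sum to `2π`. The partial derivative `∂₁c_r` is proportional to
`Δ₂(𝔫₃ - 𝔫₁) + 𝔫₂(Δ₃ - Δ₁)`, which at `Δ̄` factors as `𝔫₂(𝔫₃ - 𝔫₁)(Σ 𝔫_a - 2)`; `∂₂c_r` is the
same with `1 ↔ 2`. At `Δ̄` the bracket of `c_r` is `k² 𝔫₁𝔫₂𝔫₃ Σ_{a<b}(𝔫_a - 1)(𝔫_b - 1)` with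
`k = 2π/S`, and the symmetric sum equals `-S/2` on the plane.
-/

open Real

/-- The bracket of `c_r`, with `s` the value of `Δ₁ + Δ₂ + Δ₃`. -/
def trialBracket (a b c s x y : ℝ) : ℝ :=
  x * y * c + x * (s - x - y) * b + y * (s - x - y) * a

lemma trialBracket_comm (a b c s x y : ℝ) :
    trialBracket a b c s x y = trialBracket b a c s y x := by
  unfold trialBracket; ring

lemma hasDerivAt_trialBracket_fst (a b c s x y : ℝ) :
    HasDerivAt (fun x => trialBracket a b c s x y) (y * c + (s - x - y - x) * b - y * a) x := by
  have hx : HasDerivAt (fun x : ℝ => x) 1 x := hasDerivAt_id x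
  have hz : HasDerivAt (fun x : ℝ => s - x - y) (-1) x := by
    simpa using ((hasDerivAt_id x).const_sub s).sub_const y
  exact (((hx.mul_const y).mul_const c).add ((hx.mul hz).mul_const b) |>.add
    ((hz.const_mul y).mul_const a)).congr_deriv (by ring)

lemma hasDerivAt_trialBracket_snd (a b c s x y : ℝ) :
    HasDerivAt (fun y => trialBracket a b c s x y) (x * c + (s - x - y - y) * a - x * b) y := by
  simpa only [trialBracket_comm a b, show s - y - x = s - x - y by ring]
    using hasDerivAt_trialBracket_fst b a c s y x

section OnThePlane

variable {n1 n2 n3 : ℝ}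

lemma theta_eq_two_mul_sum (h : n1 + n2 + n3 = 2) :
    n1 ^ 2 + n2 ^ 2 + n3 ^ 2 - 2 * (n1 * n2 + n1 * n3 + n2 * n3) =
      2 * (n1 * (n1 - 1) + n2 * (n2 - 1) + n3 * (n3 - 1)) := by
  linear_combination (-(n1 + n2 + n3)) * h

lemma critical_point_eq_zero (k : ℝ) (h : n1 + n2 + n3 = 2) :
    k * (n2 * (n2 - 1)) * n3 + (k * (n3 * (n3 - 1)) - k * (n1 * (n1 - 1))) * n2
      - k * (n2 * (n2 - 1)) * n1 = 0 := by
  linear_combination k * n2 * (n3 - n1) * h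

lemma critical_value_eq (k : ℝ) (h : n1 + n2 + n3 = 2) :
    k * (n1 * (n1 - 1)) * (k * (n2 * (n2 - 1))) * n3
      + k * (n1 * (n1 - 1)) * (k * (n3 * (n3 - 1))) * n2
      + k * (n2 * (n2 - 1)) * (k * (n3 * (n3 - 1))) * n1 =
      -(k ^ 2 * n1 * n2 * n3 * (n1 * (n1 - 1) + n2 * (n2 - 1) + n3 * (n3 - 1)) / 2) := by
  linear_combination k ^ 2 * n1 * n2 * n3 * (n1 + n2 + n3 - 3) / 2 * h

end OnThePlane

/-- c-extremization for twisted N=4 super Yang-Mills: the trial right-moving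
central charge `c_r(Δ₁,Δ₂)` (with `Δ₃ = 2π − Δ₁ − Δ₂`) has vanishing partial
derivatives at `Δ̄_a = 4π𝔫_a(𝔫_a−1)/Θ`, the third potential satisfies the same
formula, and the extremal value is `12(N²−1)𝔫₁𝔫₂𝔫₃/Θ`. -/
theorem stmt6 (N n1 n2 n3 : ℝ) (hsum : n1 + n2 + n3 = 2)
    (Θ : ℝ) (hΘ : Θ = n1 ^ 2 + n2 ^ 2 + n3 ^ 2 - 2 * (n1 * n2 + n1 * n3 + n2 * n3))
    (hΘ0 : Θ ≠ 0)
    (cr : ℝ → ℝ → ℝ)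
    (hcr : ∀ Δ1 Δ2, cr Δ1 Δ2 = -(3 * (N ^ 2 - 1) / π ^ 2) *
      (Δ1 * Δ2 * n3 + Δ1 * (2 * π - Δ1 - Δ2) * n2 + Δ2 * (2 * π - Δ1 - Δ2) * n1))
    (D1 D2 : ℝ) (hD1 : D1 = 4 * π * n1 * (n1 - 1) / Θ) (hD2 : D2 = 4 * π * n2 * (n2 - 1) / Θ) :
    deriv (fun x => cr x D2) D1 = 0 ∧
    deriv (fun y => cr D1 y) D2 = 0 ∧
    2 * π - D1 - D2 = 4 * π * n3 * (n3 - 1) / Θ ∧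
    cr D1 D2 = 12 * (N ^ 2 - 1) * n1 * n2 * n3 / Θ := by
  obtain ⟨S, hS⟩ : ∃ S, S = n1 * (n1 - 1) + n2 * (n2 - 1) + n3 * (n3 - 1) := ⟨_, rfl⟩
  have hΘS : Θ = 2 * S := by rw [hΘ, theta_eq_two_mul_sum hsum, hS]
  have hS0 : S ≠ 0 := by rintro rfl; exact hΘ0 (by rw [hΘS, mul_zero])
  obtain ⟨k, hkS⟩ : ∃ k, k * S = 2 * π := ⟨2 * π / S, div_mul_cancel₀ _ hS0⟩
  have hD (n : ℝ) : 4 * π * n * (n - 1) / Θ = k * (n * (n - 1)) := by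
    rw [hΘS, div_eq_iff (mul_ne_zero two_ne_zero hS0)]
    linear_combination (-2 * n * (n - 1)) * hkS
  have hD3 : 2 * π - D1 - D2 = k * (n3 * (n3 - 1)) := by
    rw [hD1, hD2, hD, hD]
    linear_combination k * hS - hkS
  obtain rfl : cr = fun x y => -(3 * (N ^ 2 - 1) / π ^ 2) * trialBracket n1 n2 n3 (2 * π) x y :=
    funext₂ hcr
  rw [hD] at hD1 hD2
  refine ⟨?_, ?_, hD3.trans (hD n3).symm, ?_⟩
  · rw [((hasDerivAt_trialBracket_fst ..).const_mul _).deriv, hD3, hD1, hD2,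
      critical_point_eq_zero k hsum, mul_zero]
  · rw [((hasDerivAt_trialBracket_snd ..).const_mul _).deriv, hD3, hD1, hD2,
      critical_point_eq_zero k (by linarith : n2 + n1 + n3 = 2), mul_zero]
  · simp only [trialBracket]
    rw [hD3, hD1, hD2, critical_value_eq k hsum, ← hS, hΘS]
    field_simp
    linear_combination (3 * (N ^ 2 - 1) * n1 * n2 * n3 * (k * S + 2 * π)) * hkS
end

section
/- c-extremization for the twisted Klebanov-Witten theory: Let N be a real number and 𝔫₁,…,𝔫₄ real numbers with Σ_I 𝔫_I = 2. Set Υ := 2·Σ_{I=1}^4 [ 𝔫_I²(𝔫_I − 1) − ∏_{J≠I}𝔫_J ], assume Υ ≠ 0, and set Π := Σ_{a<b} 𝔫_a 𝔫_b (Σ_{c∉{a,b}} 𝔫_c²). Define c_r : ℝ³ → ℝ by c_r(Δ₁,Δ₂,Δ₃) = −3[ 2(N²−1) + N²·Σ_{I=1}^4 (𝔫_I−1)(Δ_I/π − 1)² ] where Δ₄ := 2π − Δ₁ − Δ₂ − Δ₃. Then at the point Δ̄_I = (2π/Υ)[ 2(𝔫_I³ − ∏_{J≠I}𝔫_J) −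 𝔫_I·Σ_{J=1}^4 𝔫_J² ] (I = 1,2,3) all three partial derivatives of c_r vanish, Δ̄₄ := 2π − Δ̄₁ − Δ̄₂ − Δ̄₃ is given by the same formula with I = 4, and c_r(Δ̄) = 12( N²·Π/Υ + 1/2 ). -/
/-!
Write `x_I = Δ_I/π - 1`, so that `Σ x_I = -2` and `c_r = -3(2(N² - 1) + N² Σ (𝔫_I - 1) x_I²)`.
Moving `Δ_i` against `Δ₄` gives `∂c_r/∂Δ_i = -(6N²/π)((𝔫_i - 1) x_i - (𝔫₄ - 1) x₄)`, so `Δ`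
is critical as soon as all `(𝔫_I - 1) x_I` take a common value `λ`, and then
`Σ (𝔫_I - 1) x_I² = λ Σ x_I = -2λ`.

Let `Δ̄_I = 2π P_I / Υ`. When `Σ 𝔫 = 2` one has `Σ P_I = Υ` (this is the formula for `Δ̄₄`),
`2P_I - Υ = -8 ∏_{J≠I} (𝔫_J - 1)` and `Υ + 2Π = -8 ∏_J (𝔫_J - 1)`. Hence
`(𝔫_I - 1) x̄_I = (Υ + 2Π)/Υ` for every `I`, and
`c_r(Δ̄) = -3(2(N² - 1) - 2N²(Υ + 2Π)/Υ)`.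
-/

open Real

noncomputable def trialCharge (N n1 n2 n3 n4 Δ1 Δ2 Δ3 Δ4 : ℝ) : ℝ :=
  -3 * (2 * (N ^ 2 - 1)
    + N ^ 2 * ((n1 - 1) * (Δ1 / π - 1) ^ 2 + (n2 - 1) * (Δ2 / π - 1) ^ 2
      + (n3 - 1) * (Δ3 / π - 1) ^ 2 + (n4 - 1) * (Δ4 / π - 1) ^ 2))

theorem hasDerivAt_trialCharge (N n1 n2 n3 n4 Δ1 Δ2 Δ3 c : ℝ) :
    HasDerivAt (fun x => trialCharge N n1 n2 n3 n4 x Δ2 Δ3 (c - x))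
      (-6 * N ^ 2 / π * ((n1 - 1) * (Δ1 / π - 1) - (n4 - 1) * ((c - Δ1) / π - 1))) Δ1 := by
  have hx : HasDerivAt (fun x => x / π - 1) (1 / π) Δ1 :=
    ((hasDerivAt_id Δ1).div_const π).sub_const 1
  have hy : HasDerivAt (fun x => (c - x) / π - 1) (-1 / π) Δ1 :=
    (((hasDerivAt_id Δ1).const_sub c).div_const π).sub_const 1
  have h := ((((hx.pow 2).const_mul (n1 - 1)).add_const ((n2 - 1) * (Δ2 / π - 1) ^ 2)).add_const
    ((n3 - 1) * (Δ3 / π - 1) ^ 2)).add ((hy.pow 2).const_mul (n4 - 1))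
      |>.const_mul (N ^ 2) |>.const_add (2 * (N ^ 2 - 1)) |>.const_mul (-3)
  refine h.congr_deriv ?_
  push_cast
  ring

theorem deriv_trialCharge_eq_zero {f : ℝ → ℝ} {Δ1 : ℝ} (N n1 n2 n3 n4 Δ2 Δ3 c : ℝ)
    (hf : ∀ x, f x = trialCharge N n1 n2 n3 n4 x Δ2 Δ3 (c - x))
    (hbal : (n1 - 1) * (Δ1 / π - 1) = (n4 - 1) * ((c - Δ1) / π - 1)) :
    deriv f Δ1 = 0 := by
  rw [funext hf, (hasDerivAt_trialCharge N n1 n2 n3 n4 Δ1 Δ2 Δ3 c).deriv, hbal, sub_self,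
    mul_zero]

theorem trialCharge_critical (N n1 n2 n3 n4 : ℝ) {Δ1 Δ2 Δ3 l : ℝ}
    (h1 : (n1 - 1) * (Δ1 / π - 1) = l) (h2 : (n2 - 1) * (Δ2 / π - 1) = l)
    (h3 : (n3 - 1) * (Δ3 / π - 1) = l) (h4 : (n4 - 1) * ((2 * π - Δ1 - Δ2 - Δ3) / π - 1) = l) :
    deriv (fun x => trialCharge N n1 n2 n3 n4 x Δ2 Δ3 (2 * π - x - Δ2 - Δ3)) Δ1 = 0 ∧
    deriv (fun y => trialCharge N n1 n2 n3 n4 Δ1 y Δ3 (2 * π - Δ1 - y - Δ3)) Δ2 = 0 ∧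
    deriv (fun z => trialCharge N n1 n2 n3 n4 Δ1 Δ2 z (2 * π - Δ1 - Δ2 - z)) Δ3 = 0 ∧
    trialCharge N n1 n2 n3 n4 Δ1 Δ2 Δ3 (2 * π - Δ1 - Δ2 - Δ3)
      = -3 * (2 * (N ^ 2 - 1) - 2 * N ^ 2 * l) := by
  have hx_sum :
      (Δ1 / π - 1) + (Δ2 / π - 1) + (Δ3 / π - 1) + ((2 * π - Δ1 - Δ2 - Δ3) / π - 1) = -2 := by
    field_simp
    ring
  refine ⟨?_, ?_, ?_, ?_⟩
  · exact deriv_trialCharge_eq_zero N n1 n2 n3 n4 Δ2 Δ3 (2 * π - Δ2 - Δ3)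
      (fun x => by unfold trialCharge; ring) (by linear_combination h1 - h4)
  · exact deriv_trialCharge_eq_zero N n2 n1 n3 n4 Δ1 Δ3 (2 * π - Δ1 - Δ3)
      (fun y => by unfold trialCharge; ring) (by linear_combination h2 - h4)
  · exact deriv_trialCharge_eq_zero N n3 n2 n1 n4 Δ2 Δ1 (2 * π - Δ1 - Δ2)
      (fun z => by unfold trialCharge; ring) (by linear_combination h3 - h4)
  · unfold trialCharge
    linear_combination (-3 * N ^ 2) * ((Δ1 / π - 1) * h1 + (Δ2 / π - 1) * h2 + (Δ3 / π - 1) * h3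
      + ((2 * π - Δ1 - Δ2 - Δ3) / π - 1) * h4 + l * hx_sum)

theorem sub_one_mul_div_pi_sub_one {n D P Y Q : ℝ} (hY : Y ≠ 0) (hD : D = 2 * π / Y * P)
    (hP : (n - 1) * (2 * P - Y) = Q) : (n - 1) * (D / π - 1) = Q / Y := by
  subst hD hP
  field_simp

/-- c-extremization for the twisted Klebanov-Witten theory: the trial
right-moving central charge `c_r(Δ₁,Δ₂,Δ₃)` (with `Δ₄ = 2π − Δ₁ − Δ₂ − Δ₃`)
has vanishing partial derivatives at the critical point
`Δ̄_I = (2π/Υ)[2(𝔫_I³ − ∏_{J≠I}𝔫_J) − 𝔫_I·Σ_J 𝔫_J²]`, the fourth potential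
is given by the same formula with `I = 4`, and the extremal value equals
`12(N²·Π/Υ + 1/2)`. -/
theorem stmt7 (N n1 n2 n3 n4 : ℝ) (hsum : n1 + n2 + n3 + n4 = 2)
    (Y : ℝ)
    (hY : Y = 2 * ((n1 ^ 2 * (n1 - 1) - n2 * n3 * n4) + (n2 ^ 2 * (n2 - 1) - n1 * n3 * n4)
      + (n3 ^ 2 * (n3 - 1) - n1 * n2 * n4) + (n4 ^ 2 * (n4 - 1) - n1 * n2 * n3)))
    (hY0 : Y ≠ 0)
    (Pr : ℝ)
    (hPr : Pr = n1 * n2 * (n3 ^ 2 + n4 ^ 2) + n1 * n3 * (n2 ^ 2 + n4 ^ 2)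
      + n1 * n4 * (n2 ^ 2 + n3 ^ 2) + n2 * n3 * (n1 ^ 2 + n4 ^ 2)
      + n2 * n4 * (n1 ^ 2 + n3 ^ 2) + n3 * n4 * (n1 ^ 2 + n2 ^ 2))
    (cr : ℝ → ℝ → ℝ → ℝ)
    (hcr : ∀ Δ1 Δ2 Δ3, cr Δ1 Δ2 Δ3 = -3 * (2 * (N ^ 2 - 1)
      + N ^ 2 * ((n1 - 1) * (Δ1 / π - 1) ^ 2 + (n2 - 1) * (Δ2 / π - 1) ^ 2
        + (n3 - 1) * (Δ3 / π - 1) ^ 2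
        + (n4 - 1) * ((2 * π - Δ1 - Δ2 - Δ3) / π - 1) ^ 2)))
    (D1 D2 D3 : ℝ)
    (hD1 : D1 = 2 * π / Y * (2 * (n1 ^ 3 - n2 * n3 * n4) - n1 * (n1 ^ 2 + n2 ^ 2 + n3 ^ 2 + n4 ^ 2)))
    (hD2 : D2 = 2 * π / Y * (2 * (n2 ^ 3 - n1 * n3 * n4) - n2 * (n1 ^ 2 + n2 ^ 2 + n3 ^ 2 + n4 ^ 2)))
    (hD3 : D3 = 2 * π / Y * (2 * (n3 ^ 3 - n1 * n2 * n4) - n3 * (n1 ^ 2 + n2 ^ 2 + n3 ^ 2 + n4 ^ 2))) :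
    deriv (fun x => cr x D2 D3) D1 = 0 ∧
    deriv (fun y => cr D1 y D3) D2 = 0 ∧
    deriv (fun z => cr D1 D2 z) D3 = 0 ∧
    2 * π - D1 - D2 - D3
      = 2 * π / Y * (2 * (n4 ^ 3 - n1 * n2 * n3) - n4 * (n1 ^ 2 + n2 ^ 2 + n3 ^ 2 + n4 ^ 2)) ∧
    cr D1 D2 D3 = 12 * (N ^ 2 * Pr / Y + 1 / 2) := by
  obtain rfl : cr = fun a b c => trialCharge N n1 n2 n3 n4 a b c (2 * π - a - b - c) :=
    funext fun a => funext fun b => funext fun c => hcr a b c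
  obtain rfl : n4 = 2 - n1 - n2 - n3 := by linarith
  have hD4 : 2 * π - D1 - D2 - D3 = 2 * π / Y * (2 * ((2 - n1 - n2 - n3) ^ 3 - n1 * n2 * n3)
      - (2 - n1 - n2 - n3) * (n1 ^ 2 + n2 ^ 2 + n3 ^ 2 + (2 - n1 - n2 - n3) ^ 2)) := by
    rw [hD1, hD2, hD3]
    field_simp
    rw [hY]
    ring
  obtain ⟨hd1, hd2, hd3, hval⟩ :=
    trialCharge_critical N n1 n2 n3 (2 - n1 - n2 - n3) (l := (Y + 2 * Pr) / Y)
      (sub_one_mul_div_pi_sub_one hY0 hD1 (by rw [hY, hPr]; ring))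
      (sub_one_mul_div_pi_sub_one hY0 hD2 (by rw [hY, hPr]; ring))
      (sub_one_mul_div_pi_sub_one hY0 hD3 (by rw [hY, hPr]; ring))
      (sub_one_mul_div_pi_sub_one hY0 hD4 (by rw [hY, hPr]; ring))
  refine ⟨hd1, hd2, hd3, hD4, hval.trans ?_⟩
  field_simp
  ring
end

section
/- Normalization of the large-N ABJM eigenvalue density: Let 0 < Δ₁ < Δ₂ and 0 < Δ₃ < Δ₄ be reals with Δ₁+Δ₂+Δ₃+Δ₄ = 2π, and let μ > 0. Then ∫_{−μ/Δ₃}^{−μ/Δ₄} (μ + tΔ₃)/((Δ₁+Δ₃)(Δ₂+Δ₃)(Δ₄−Δ₃)) dt + ∫_{−μ/Δ₄}^{μ/Δ₂} (2πμ + t(Δ₃Δ₄ − Δ₁Δ₂))/((Δ₁+Δ₃)(Δ₂+Δ₃)(Δ₁+Δ₄)(Δ₂+Δ₄)) dt + ∫_{μ/Δ₂}^{μ/Δ₁} (μ − tΔ₁)/((Δ₁+Δ₃)(Δ₁+Δ₄)(Δ₂−Δ₁)) dt = μ²/(2Δ₁Δ₂Δ₃Δ₄). In particular the total integral equals 1 if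 and only if μ = √(2·Δ₁Δ₂Δ₃Δ₄). -/
open Real

lemma lin_integral (a b c d e : ℝ) :
    ∫ t in a..b, (c + t * d) / e = ((b - a) * c + (b ^ 2 - a ^ 2) / 2 * d) / e := by
  have h : ∀ t : ℝ, (c + t * d) / e = c / e + t * (d / e) := by
    intro t; rw [add_div, mul_div_assoc]
  simp only [h]
  rw [intervalIntegral.integral_add (intervalIntegrable_const)
      ((intervalIntegral.intervalIntegrable_id).mul_const _)]
  rw [intervalIntegral.integral_const, intervalIntegral.integral_mul_const,
      integral_id]
  field_simp
  ring

/-- Normalization of the large-N ABJM eigenvalue density: the total integral of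
the three-piece density equals `μ²/(2Δ₁Δ₂Δ₃Δ₄)`; in particular it equals `1`
iff `μ = √(2Δ₁Δ₂Δ₃Δ₄)`. -/
theorem stmt9 (Δ1 Δ2 Δ3 Δ4 μ : ℝ) (h1 : 0 < Δ1) (h12 : Δ1 < Δ2) (h3 : 0 < Δ3)
    (h34 : Δ3 < Δ4) (hsum : Δ1 + Δ2 + Δ3 + Δ4 = 2 * π) (hμ : 0 < μ)
    (Itot : ℝ)
    (hItot : Itot
      = (∫ t in (-μ / Δ3)..(-μ / Δ4), (μ + t * Δ3) / ((Δ1 + Δ3) * (Δ2 + Δ3) * (Δ4 - Δ3)))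
      + (∫ t in (-μ / Δ4)..(μ / Δ2),
          (2 * π * μ + t * (Δ3 * Δ4 - Δ1 * Δ2))
            / ((Δ1 + Δ3) * (Δ2 + Δ3) * (Δ1 + Δ4) * (Δ2 + Δ4)))
      + (∫ t in (μ / Δ2)..(μ / Δ1), (μ - t * Δ1) / ((Δ1 + Δ3) * (Δ1 + Δ4) * (Δ2 - Δ1)))) :
    Itot = μ ^ 2 / (2 * (Δ1 * Δ2 * Δ3 * Δ4)) ∧
    (Itot = 1 ↔ μ = Real.sqrt (2 * (Δ1 * Δ2 * Δ3 * Δ4))) := by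
  have h2 : 0 < Δ2 := h1.trans h12
  have h4 : 0 < Δ4 := h3.trans h34
  have key : Itot = μ ^ 2 / (2 * (Δ1 * Δ2 * Δ3 * Δ4)) := by
    rw [hItot]
    have e3 : ∀ t : ℝ, (μ - t * Δ1) / ((Δ1 + Δ3) * (Δ1 + Δ4) * (Δ2 - Δ1))
        = (μ + t * (-Δ1)) / ((Δ1 + Δ3) * (Δ1 + Δ4) * (Δ2 - Δ1)) := by
      intro t; ring_nf
    simp only [e3]
    rw [lin_integral, lin_integral, lin_integral, ← hsum]
    have hn13 : Δ1 + Δ3 ≠ 0 := by positivity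
    have hn23 : Δ2 + Δ3 ≠ 0 := by positivity
    have hn14 : Δ1 + Δ4 ≠ 0 := by positivity
    have hn24 : Δ2 + Δ4 ≠ 0 := by positivity
    have hn43 : Δ4 - Δ3 ≠ 0 := sub_ne_zero.2 (ne_of_gt h34)
    have hn21 : Δ2 - Δ1 ≠ 0 := sub_ne_zero.2 (ne_of_gt h12)
    field_simp
    ring
  refine ⟨key, ?_⟩
  have hP : 0 < 2 * (Δ1 * Δ2 * Δ3 * Δ4) := by positivity
  rw [key]
  constructor
  · intro h
    have hμ2 : μ ^ 2 = 2 * (Δ1 * Δ2 * Δ3 * Δ4) := by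
      field_simp at h; linarith
    rw [← hμ2, Real.sqrt_sq hμ.le]
  · intro h
    rw [h, Real.sq_sqrt hP.le, div_self hP.ne']
end

section
/- On-shell value of the twisted superpotential for massive type IIA quivers: Let n > 0 and S > 0 be reals, κ = n/S, ρ(t) = (3^{1/6}/2)·κ^{1/3} − (2/3^{3/2})·κ·t², t_± = ±(3^{5/6}/2)·κ^{−1/3}, and v(t) = −t/√3. Then −i·[ n·∫_{t₋}^{t₊} ρ(t)·( −i t v(t) + (t² − v(t)²)/2 ) dt + (iS/(1 + i/√3))·∫_{t₋}^{t₊} ρ(t)² dt ] = (3/5)·μ, where μ = (√3/4)·(1 − i/√3)·n^{1/3}·(3S)^{2/3}. Equivalently, n·(1/3 + i/√3)·∫ t²ρ(t) dt + (iS/(1 + i/√3))·∫ ρ(t)² dt = i·(3/5)·μ. -/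
/-!
The Bethe-ansatz density is a parabola `ρ(t) = a - b t²` whose endpoints `±t₊` are its zeros
(`b t₊² = a`), so its moments are elementary: `∫ t² ρ = (4/15) a t₊³` and `∫ ρ² = (16/15) a² t₊`.
On the solution `v = -t/√3` the integrand of the first term collapses to `(1/3 + i/√3) t² ρ`.
With `κ = n/S`, both `n a t₊³` and `S a² t₊` are multiples of `n^{1/3} (3S)^{2/3}`, and what is left
is an identity between complex numbers in `√3`.
-/

open Real Complex intervalIntegral

lemma integral_sq_mul_const_sub_mul_sq (a b T : ℝ) :
    ∫ t in -T..T, t ^ 2 * (a - b * t ^ 2) = 2 * a * T ^ 3 / 3 - 2 * b * T ^ 5 / 5 := by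
  have h : (fun t : ℝ => t ^ 2 * (a - b * t ^ 2)) = fun t => a * t ^ 2 - b * t ^ 4 := by
    ext; ring
  rw [h, integral_sub, integral_const_mul, integral_const_mul, integral_pow, integral_pow]
  · ring
  all_goals apply Continuous.intervalIntegrable; fun_prop

lemma integral_const_sub_mul_sq_sq (a b T : ℝ) :
    ∫ t in -T..T, (a - b * t ^ 2) ^ 2
      = 2 * a ^ 2 * T - 4 * a * b * T ^ 3 / 3 + 2 * b ^ 2 * T ^ 5 / 5 := by
  have h : (fun t : ℝ => (a - b * t ^ 2) ^ 2)
      = fun t => a ^ 2 - 2 * a * b * t ^ 2 + b ^ 2 * t ^ 4 := by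
    ext; ring
  rw [h, integral_add, integral_sub, integral_const, integral_const_mul, integral_const_mul,
    integral_pow, integral_pow]
  · simp only [sub_neg_eq_add, smul_eq_mul, Nat.reduceAdd, Nat.cast_ofNat]; ring
  all_goals apply Continuous.intervalIntegrable; fun_prop

lemma bethe_profile_scaling {n S κ a b T : ℝ} (hn : 0 < n) (hS : 0 < S) (hκ : κ = n / S)
    (ha : a = (3 : ℝ) ^ ((1 : ℝ) / 6) / 2 * κ ^ ((1 : ℝ) / 3))
    (hb : b = 2 / (3 : ℝ) ^ ((3 : ℝ) / 2) * κ)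
    (hT : T = (3 : ℝ) ^ ((5 : ℝ) / 6) / 2 * κ ^ (-(1 : ℝ) / 3)) :
    b * T ^ 2 = a ∧
      n * (a * T ^ 3) = 9 / 16 * (n ^ ((1 : ℝ) / 3) * (3 * S) ^ ((2 : ℝ) / 3)) ∧
      S * (a ^ 2 * T) = √3 / 8 * (n ^ ((1 : ℝ) / 3) * (3 * S) ^ ((2 : ℝ) / 3)) := by
  have hκ0 : 0 < κ := hκ ▸ div_pos hn hS
  have h3 : (0 : ℝ) ≤ 3 := by norm_num
  -- every quantity is a monomial in these three cube/sixth roots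
  set r := (3 : ℝ) ^ ((1 : ℝ) / 6)
  set k := κ ^ ((1 : ℝ) / 3)
  set w := S ^ ((1 : ℝ) / 3)
  have hr : 0 < r := by positivity
  have hk : 0 < k := by positivity
  have hr6 : r ^ 6 = 3 := by rw [← rpow_mul_natCast h3]; norm_num
  have hκk : κ = k ^ 3 := by rw [← rpow_mul_natCast hκ0.le]; norm_num
  have hSw : S = w ^ 3 := by rw [← rpow_mul_natCast hS.le]; norm_num
  have hsqrt : √3 = r ^ 3 := by rw [sqrt_eq_rpow, ← rpow_mul_natCast h3]; norm_num
  have hr9 : (3 : ℝ) ^ ((3 : ℝ) / 2) = r ^ 9 := by rw [← rpow_mul_natCast h3]; norm_num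
  have hr5 : (3 : ℝ) ^ ((5 : ℝ) / 6) = r ^ 5 := by rw [← rpow_mul_natCast h3]; norm_num
  have hkinv : κ ^ (-(1 : ℝ) / 3) = k⁻¹ := by rw [neg_div, rpow_neg hκ0.le]
  have hn3 : n ^ ((1 : ℝ) / 3) = k * w := by
    rw [show n = κ * S by rw [hκ]; field_simp, mul_rpow hκ0.le hS.le]
  have h3S : (3 * S) ^ ((2 : ℝ) / 3) = r ^ 4 * w ^ 2 := by
    rw [mul_rpow h3 hS.le, ← rpow_mul_natCast h3, ← rpow_mul_natCast hS.le]; norm_num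
  have hnkw : n = k ^ 3 * w ^ 3 := by rw [← hκk, ← hSw, hκ]; field_simp
  rw [hn3, h3S, hsqrt]
  rw [hr9, hκk] at hb
  rw [hr5, hkinv] at hT
  subst ha hb hT
  refine ⟨?_, ?_, ?_⟩
  · field_simp
  · rw [hnkw]; field_simp; linear_combination 16 * w ^ 3 * (r ^ 6 + 3) * hr6
  · rw [hSw]; field_simp; ring

lemma twisted_integrand_eq (t y : ℝ) :
    (y : ℂ) * (-I * t * ((-t / √3 : ℝ) : ℂ) + ((t : ℂ) ^ 2 - ((-t / √3 : ℝ) : ℂ) ^ 2) / 2)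
      = (1 / 3 + I / (√3 : ℂ)) * ((t ^ 2 * y : ℝ) : ℂ) := by
  have h3 : ((√3 : ℝ) : ℂ) ^ 2 = 3 := by exact_mod_cast sq_sqrt (by norm_num : (0 : ℝ) ≤ 3)
  have h0 : ((√3 : ℝ) : ℂ) ≠ 0 := by exact_mod_cast (sqrt_pos.2 (by norm_num : (0 : ℝ) < 3)).ne'
  push_cast
  field_simp
  linear_combination (y * t ^ 2 : ℂ) * h3

lemma virial_coefficient :
    (1 / 3 + I / (√3 : ℂ)) * (3 / 20) + I / (1 + I / (√3 : ℂ)) * (2 * √3 / 15)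
      = I * (3 / 5) * ((√3 : ℂ) / 4 * (1 - I / √3)) := by
  have h3 : ((√3 : ℝ) : ℂ) ^ 2 = 3 := by exact_mod_cast sq_sqrt (by norm_num : (0 : ℝ) ≤ 3)
  have h0 : ((√3 : ℝ) : ℂ) ≠ 0 := by exact_mod_cast (sqrt_pos.2 (by norm_num : (0 : ℝ) < 3)).ne'
  have hD : (√3 : ℂ) + I ≠ 0 := by
    intro h; simpa using congrArg Complex.im h
  rw [show (1 : ℂ) + I / √3 = (√3 + I) / √3 by field_simp]
  field_simp
  linear_combination (300 - 100 * (√3 : ℂ) * I) * h3 + (900 + 900 * (√3 : ℂ) * I) * I_sq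

/-- On-shell value of the twisted superpotential for massive type IIA quivers:
evaluating the twisted superpotential functional on the large-N Bethe-ansatz
solution `ρ(t)`, `v(t) = −t/√3` gives `(3/5)·μ` with
`μ = (√3/4)(1 − i/√3)n^{1/3}(3S)^{2/3}`; equivalently
`n(1/3 + i/√3)∫t²ρ dt + (iS/(1 + i/√3))∫ρ² dt = i(3/5)μ`. -/
theorem stmt14 (n S : ℝ) (hn : 0 < n) (hS : 0 < S)
    (κ : ℝ) (hκ : κ = n / S)
    (ρ : ℝ → ℝ)
    (hρ : ∀ t, ρ t = (3 : ℝ) ^ ((1 : ℝ) / 6) / 2 * κ ^ ((1 : ℝ) / 3)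
      - 2 / (3 : ℝ) ^ ((3 : ℝ) / 2) * κ * t ^ 2)
    (tp tm : ℝ)
    (htp : tp = (3 : ℝ) ^ ((5 : ℝ) / 6) / 2 * κ ^ (-(1 : ℝ) / 3))
    (htm : tm = -((3 : ℝ) ^ ((5 : ℝ) / 6) / 2 * κ ^ (-(1 : ℝ) / 3)))
    (v : ℝ → ℝ) (hv : ∀ t, v t = -t / Real.sqrt 3)
    (μ : ℂ)
    (hμ : μ = ((Real.sqrt 3 / 4 : ℝ) : ℂ) * (1 - Complex.I / (Real.sqrt 3 : ℂ))
      * ((n ^ ((1 : ℝ) / 3) : ℝ) : ℂ) * (((3 * S) ^ ((2 : ℝ) / 3) : ℝ) : ℂ)) :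
    -Complex.I * ((n : ℂ) * (∫ t in tm..tp, (ρ t : ℂ) *
          (-Complex.I * (t : ℂ) * (v t : ℂ) + ((t : ℂ) ^ 2 - (v t : ℂ) ^ 2) / 2))
        + Complex.I * (S : ℂ) / (1 + Complex.I / (Real.sqrt 3 : ℂ))
          * (∫ t in tm..tp, (ρ t : ℂ) ^ 2))
      = 3 / 5 * μ ∧
    (n : ℂ) * (1 / 3 + Complex.I / (Real.sqrt 3 : ℂ))
        * (∫ t in tm..tp, ((t ^ 2 * ρ t : ℝ) : ℂ))
      + Complex.I * (S : ℂ) / (1 + Complex.I / (Real.sqrt 3 : ℂ))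
        * (∫ t in tm..tp, (ρ t : ℂ) ^ 2)
      = Complex.I * (3 / 5) * μ := by
  obtain ⟨hedge, hnM, hSM⟩ := bethe_profile_scaling hn hS hκ rfl rfl htp
  set a := (3 : ℝ) ^ ((1 : ℝ) / 6) / 2 * κ ^ ((1 : ℝ) / 3)
  set b := 2 / (3 : ℝ) ^ ((3 : ℝ) / 2) * κ
  set M := n ^ ((1 : ℝ) / 3) * (3 * S) ^ ((2 : ℝ) / 3) with hM
  obtain rfl : tm = -tp := by rw [htm, htp]
  have hmoment : ∫ t in -tp..tp, ((t ^ 2 * ρ t : ℝ) : ℂ) = ((4 / 15 * a * tp ^ 3 : ℝ) : ℂ) := by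
    rw [integral_ofReal]
    simp only [hρ]
    rw [integral_sq_mul_const_sub_mul_sq, ← hedge]
    ring_nf
  have hnorm : ∫ t in -tp..tp, (ρ t : ℂ) ^ 2 = ((16 / 15 * a ^ 2 * tp : ℝ) : ℂ) := by
    simp only [← ofReal_pow, integral_ofReal, hρ]
    rw [integral_const_sub_mul_sq_sq, ← hedge]
    ring_nf
  have hvirial : (n : ℂ) * (1 / 3 + I / (√3 : ℂ)) * (∫ t in -tp..tp, ((t ^ 2 * ρ t : ℝ) : ℂ))
      + I * S / (1 + I / (√3 : ℂ)) * (∫ t in -tp..tp, (ρ t : ℂ) ^ 2) = I * (3 / 5) * μ := by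
    have hnM' : (n : ℂ) * ((a : ℂ) * (tp : ℂ) ^ 3) = 9 / 16 * M := by
      simpa using congrArg ((↑) : ℝ → ℂ) hnM
    have hSM' : (S : ℂ) * ((a : ℂ) ^ 2 * tp) = √3 / 8 * M := by
      simpa using congrArg ((↑) : ℝ → ℂ) hSM
    have hμM : μ = (√3 : ℂ) / 4 * (1 - I / √3) * M := by rw [hμ, hM]; push_cast; ring
    rw [hmoment, hnorm, hμM]
    push_cast
    linear_combination (4 / 15 * (1 / 3 + I / (√3 : ℂ))) * hnM'
      + (16 / 15 * I / (1 + I / (√3 : ℂ))) * hSM' + (M : ℂ) * virial_coefficient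
  refine ⟨?_, hvirial⟩
  simp only [hv, twisted_integrand_eq, integral_const_mul]
  linear_combination (-I) * hvirial + (-(3 / 5) * μ) * I_sq
end

section
/- Characterization of the constrained extremum governing the D2_k index and the supergravity attractor: Let p ∈ ℝ³ and H ∈ ℝ³ with H₁,H₂,H₃ > 0 and H₁+H₂+H₃ = 1. Define g : (0,∞)³ → ℝ by g(x) = (x₁x₂x₃)^{2/3}·( p₁/x₁ + p₂/x₂ + p₃/x₃ ) and set S = p₁/H₁ + p₂/H₂ + p₃/H₃. Then the three partial derivatives of g at H are all equal (i.e. H is a critical point of g restricted to the plane x₁+x₂+x₃ = 1) if and only if p_I = (S/3)·H_I·(2 − 3H_I) for I = 1,2,3; equivalently the ratios p_I / ( H_I(3H_I − 2) ) are equal for I = 1,2,3 whenever the denominators are nonzero. -/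
open Real

/-!
The `I`-th partial derivative of `g` at `H` is `V^{2/3} · t_I` with `V = H₁H₂H₃` and
`t_I = 2S/(3 H_I) - p_I/H_I²`. Since `Σ H_I t_I = 2S - S = S` and `Σ H_I = 1`, a common value
of the `t_I` can only be `S`, and `t_I = S` is exactly `p_I = (S/3) H_I (2 - 3 H_I)`.
-/

lemma deriv_mul_rpow_mul_div_add {f : ℝ → ℝ} {r P A c a : ℝ} (hc : 0 < c) (ha : 0 < a)
    (hf : ∀ x, 0 < x → f x = (x * c) ^ r * (P / x + A)) :
    deriv f a = (a * c) ^ r * (r * (P / a + A) / a - P / a ^ 2) := by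
  have hpow : HasDerivAt (fun x : ℝ => x ^ r) (r * a ^ (r - 1)) a :=
    hasDerivAt_rpow_const (Or.inl ha.ne')
  have hinv : HasDerivAt (fun x : ℝ => P / x + A) (P * -(a ^ 2)⁻¹) a := by
    simpa only [div_eq_mul_inv] using ((hasDerivAt_inv ha.ne').const_mul P).add_const A
  have hf_near : f =ᶠ[nhds a] fun x => x ^ r * (P / x + A) * c ^ r := by
    filter_upwards [Ioi_mem_nhds ha] with x hx
    rw [hf x hx, mul_rpow hx.le hc.le]
    ring
  have hprod : HasDerivAt (fun x => x ^ r * (P / x + A) * c ^ r)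
      ((r * a ^ (r - 1) * (P / a + A) + a ^ r * (P * -(a ^ 2)⁻¹)) * c ^ r) a :=
    (hpow.mul hinv).mul_const _
  rw [hf_near.deriv_eq, hprod.deriv, mul_rpow ha.le hc.le, rpow_sub_one ha.ne']
  field_simp
  ring

lemma two_thirds_div_sub_div_sq_eq_iff {S q h : ℝ} (hh : 0 < h) :
    2 / 3 * S / h - q / h ^ 2 = S ↔ q = S / 3 * h * (2 - 3 * h) := by
  have hdiff : 2 / 3 * S / h - q / h ^ 2 - S = (S / 3 * h * (2 - 3 * h) - q) / h ^ 2 := by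
    field_simp
    ring
  rw [← sub_eq_zero, hdiff, div_eq_zero_iff, or_iff_left (pow_ne_zero 2 hh.ne'), sub_eq_zero,
    eq_comm]

lemma two_thirds_div_sub_div_sq_all_eq_iff {p H : Fin 3 → ℝ} {S : ℝ} (hH : ∀ i, 0 < H i)
    (hsum : H 0 + H 1 + H 2 = 1) (hS : S = p 0 / H 0 + p 1 / H 1 + p 2 / H 2) :
    (2 / 3 * S / H 0 - p 0 / H 0 ^ 2 = 2 / 3 * S / H 1 - p 1 / H 1 ^ 2 ∧
      2 / 3 * S / H 1 - p 1 / H 1 ^ 2 = 2 / 3 * S / H 2 - p 2 / H 2 ^ 2) ↔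
      ∀ i, p i = S / 3 * H i * (2 - 3 * H i) := by
  simp only [← two_thirds_div_sub_div_sq_eq_iff (hH _)]
  constructor
  · rintro ⟨e01, e12⟩
    have hweighted : H 0 * (2 / 3 * S / H 0 - p 0 / H 0 ^ 2) +
        H 1 * (2 / 3 * S / H 1 - p 1 / H 1 ^ 2) + H 2 * (2 / 3 * S / H 2 - p 2 / H 2 ^ 2) = S := by
      have := (hH 0).ne'; have := (hH 1).ne'; have := (hH 2).ne'
      rw [hS]
      field_simp
      ring
    have h0 : 2 / 3 * S / H 0 - p 0 / H 0 ^ 2 = S := by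
      linear_combination hweighted + (H 1 + H 2) * e01 + H 2 * e12 -
        (2 / 3 * S / H 0 - p 0 / H 0 ^ 2) * hsum
    intro i
    fin_cases i
    exacts [h0, e01 ▸ h0, e12 ▸ e01 ▸ h0]
  · intro h
    rw [h 0, h 1, h 2]
    exact ⟨rfl, rfl⟩

/-- Characterization of the constrained extremum governing the D2_k index and
the supergravity attractor: for `g(x) = (x₁x₂x₃)^{2/3}(p₁/x₁ + p₂/x₂ + p₃/x₃)`
and `H` in the plane `x₁+x₂+x₃ = 1` with positive entries, the three partial
derivatives of `g` at `H` are all equal iff `p_I = (S/3)·H_I·(2 − 3H_I)` for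
`I = 1,2,3`, where `S = Σ_I p_I/H_I`. -/
theorem stmt15 (p H : Fin 3 → ℝ) (hH : ∀ i, 0 < H i) (hsum : H 0 + H 1 + H 2 = 1)
    (g : ℝ → ℝ → ℝ → ℝ)
    (hg : ∀ x1 x2 x3 : ℝ, 0 < x1 → 0 < x2 → 0 < x3 →
      g x1 x2 x3 = (x1 * x2 * x3) ^ ((2 : ℝ) / 3) * (p 0 / x1 + p 1 / x2 + p 2 / x3))
    (S : ℝ) (hS : S = p 0 / H 0 + p 1 / H 1 + p 2 / H 2) :
    (deriv (fun x => g x (H 1) (H 2)) (H 0) = deriv (fun x => g (H 0) x (H 2)) (H 1) ∧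
      deriv (fun x => g (H 0) x (H 2)) (H 1) = deriv (fun x => g (H 0) (H 1) x) (H 2))
    ↔ (∀ i, p i = S / 3 * H i * (2 - 3 * H i)) := by
  have h0 := hH 0; have h1 := hH 1; have h2 := hH 2
  rw [deriv_mul_rpow_mul_div_add (P := p 0) (A := p 1 / H 1 + p 2 / H 2) (c := H 1 * H 2)
      (by positivity) h0 fun x hx => by rw [hg x _ _ hx h1 h2]; ring_nf,
    deriv_mul_rpow_mul_div_add (P := p 1) (A := p 0 / H 0 + p 2 / H 2) (c := H 0 * H 2)
      (by positivity) h1 fun x hx => by rw [hg _ x _ h0 hx h2]; ring_nf,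
    deriv_mul_rpow_mul_div_add (P := p 2) (A := p 0 / H 0 + p 1 / H 1) (c := H 0 * H 1)
      (by positivity) h2 fun x hx => by rw [hg _ _ x h0 h1 hx]; ring_nf]
  have hS0 : p 0 / H 0 + (p 1 / H 1 + p 2 / H 2) = S := by rw [hS]; ring
  have hS1 : p 1 / H 1 + (p 0 / H 0 + p 2 / H 2) = S := by rw [hS]; ring
  have hS2 : p 2 / H 2 + (p 0 / H 0 + p 1 / H 1) = S := by rw [hS]; ring
  have hV1 : H 1 * (H 0 * H 2) = H 0 * (H 1 * H 2) := by ring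
  have hV2 : H 2 * (H 0 * H 1) = H 0 * (H 1 * H 2) := by ring
  have hV : (H 0 * (H 1 * H 2)) ^ ((2 : ℝ) / 3) ≠ 0 := by positivity
  rw [hS0, hS1, hS2, hV1, hV2, mul_right_inj' hV, mul_right_inj' hV]
  exact two_thirds_div_sub_div_sq_all_eq_iff hH hsum hS
end

section
/- Matching of the D2_k twisted index and the massive IIA black hole entropy: Let g, m, G, k, N > 0 be reals satisfying the holographic dictionary m^{1/3}·g^{−7/3}/(4G) = (3^{2/3}/(2^{2/3}·5))·k^{1/3}·N^{5/3}, and set c = m/g. Let H ∈ ℝ³ with H_j > 0 and H₁+H₂+H₃ = 1, let 𝔫 ∈ ℝ³, and set p_j = 𝔫_j/(2g). Then Re[ −(3^{7/6}/(5·2^{5/3}))·(1 − i/√3)·k^{1/3}·N^{5/3}·( (2πH₁)(2πH₂)(2πH₃) )^{2/3}·Σ_{j=1}^3 𝔫_j/(2πH_j) ] = −(π√3/(2gG))·c^{1/3}·(H₁H₂H₃)^{2/3}·Σ_{j=1}^3 p_j/H_j. -/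
open Real

/-- Matching of the D2_k twisted index and the massive IIA black hole entropy:
under the holographic dictionary, the real part of the large-N topologically
twisted index of the D2_k theory evaluated at `Δ_j = 2πH_j` equals the
Bekenstein-Hawking entropy of the dual static BPS black hole. -/
theorem stmt16 (g m G k N : ℝ) (hg : 0 < g) (hm : 0 < m) (hG : 0 < G)
    (hk : 0 < k) (hN : 0 < N)
    (hdict : m ^ ((1 : ℝ) / 3) * g ^ (-(7 : ℝ) / 3) / (4 * G)
      = (3 : ℝ) ^ ((2 : ℝ) / 3) / ((2 : ℝ) ^ ((2 : ℝ) / 3) * 5) * k ^ ((1 : ℝ) / 3)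
          * N ^ ((5 : ℝ) / 3))
    (c : ℝ) (hc : c = m / g)
    (H nn : Fin 3 → ℝ) (hH : ∀ j, 0 < H j) (hHsum : H 0 + H 1 + H 2 = 1)
    (p : Fin 3 → ℝ) (hp : ∀ j, p j = nn j / (2 * g)) :
    (-((((3 : ℝ) ^ ((7 : ℝ) / 6) / (5 * (2 : ℝ) ^ ((5 : ℝ) / 3)) : ℝ)) : ℂ)
        * (1 - Complex.I / (Real.sqrt 3 : ℂ))
        * ((k ^ ((1 : ℝ) / 3) : ℝ) : ℂ) * ((N ^ ((5 : ℝ) / 3) : ℝ) : ℂ)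
        * (((((2 * π * H 0) * (2 * π * H 1) * (2 * π * H 2)) ^ ((2 : ℝ) / 3) : ℝ)) : ℂ)
        * ((nn 0 / (2 * π * H 0) + nn 1 / (2 * π * H 1) + nn 2 / (2 * π * H 2) : ℝ) : ℂ)).re
      = -(π * Real.sqrt 3 / (2 * g * G)) * c ^ ((1 : ℝ) / 3)
        * (H 0 * H 1 * H 2) ^ ((2 : ℝ) / 3) * (p 0 / H 0 + p 1 / H 1 + p 2 / H 2) := by
  have hπ : (0:ℝ) < π := Real.pi_pos
  have h0 := hH 0
  have h1 := hH 1
  have h2 := hH 2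
  set X : ℝ := -((3 : ℝ) ^ ((7 : ℝ) / 6) / (5 * (2 : ℝ) ^ ((5 : ℝ) / 3))
      * (k ^ ((1 : ℝ) / 3)) * (N ^ ((5 : ℝ) / 3))
      * (((2 * π * H 0) * (2 * π * H 1) * (2 * π * H 2)) ^ ((2 : ℝ) / 3))
      * (nn 0 / (2 * π * H 0) + nn 1 / (2 * π * H 1) + nn 2 / (2 * π * H 2))) with hX
  have hz : (-((((3 : ℝ) ^ ((7 : ℝ) / 6) / (5 * (2 : ℝ) ^ ((5 : ℝ) / 3)) : ℝ)) : ℂ)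
        * (1 - Complex.I / (Real.sqrt 3 : ℂ))
        * ((k ^ ((1 : ℝ) / 3) : ℝ) : ℂ) * ((N ^ ((5 : ℝ) / 3) : ℝ) : ℂ)
        * (((((2 * π * H 0) * (2 * π * H 1) * (2 * π * H 2)) ^ ((2 : ℝ) / 3) : ℝ)) : ℂ)
        * ((nn 0 / (2 * π * H 0) + nn 1 / (2 * π * H 1) + nn 2 / (2 * π * H 2) : ℝ) : ℂ))
      = (X : ℂ) * (1 - Complex.I / (Real.sqrt 3 : ℂ)) := by
    rw [hX]; push_cast; ring
  rw [hz, Complex.re_ofReal_mul]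
  have hre1 : (1 - Complex.I / ((Real.sqrt 3 : ℝ) : ℂ)).re = 1 := by
    simp [Complex.div_re]
  rw [hre1, mul_one, hX]
  -- now a purely real identity
  have hW : ((2 * π * H 0) * (2 * π * H 1) * (2 * π * H 2)) ^ ((2 : ℝ)/3)
      = (2*π)^2 * (H 0 * H 1 * H 2) ^ ((2 : ℝ)/3) := by
    rw [show (2*π*H 0) * (2*π*H 1) * (2*π*H 2)
        = ((2*π)^(3:ℕ) : ℝ) * (H 0 * H 1 * H 2) by ring]
    rw [Real.mul_rpow (by positivity) (by positivity),
      ← Real.rpow_natCast (2*π) 3, ← Real.rpow_mul (by positivity)]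
    norm_num
  have hc13 : c ^ ((1:ℝ)/3) = m ^ ((1:ℝ)/3) / g ^ ((1:ℝ)/3) := by
    rw [hc, Real.div_rpow hm.le hg.le]
  have hmul : g ^ (-(7:ℝ)/3) * g ^ ((7:ℝ)/3) = 1 := by
    rw [← Real.rpow_add hg]; norm_num
  have hd2 : m ^ ((1:ℝ)/3) * g ^ (-(7:ℝ)/3)
      = (3 : ℝ) ^ ((2 : ℝ) / 3) / ((2 : ℝ) ^ ((2 : ℝ) / 3) * 5) * k ^ ((1 : ℝ) / 3)
          * N ^ ((5 : ℝ) / 3) * (4 * G) := by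
    rw [← hdict]; field_simp
  have hm13 : m ^ ((1:ℝ)/3)
      = (3 : ℝ) ^ ((2 : ℝ) / 3) / ((2 : ℝ) ^ ((2 : ℝ) / 3) * 5) * k ^ ((1 : ℝ) / 3)
          * N ^ ((5 : ℝ) / 3) * (4 * G) * g ^ ((7:ℝ)/3) := by
    linear_combination g ^ ((7:ℝ)/3) * hd2 - m ^ ((1:ℝ)/3) * hmul
  have hg73 : g ^ ((7:ℝ)/3) = g^2 * g ^ ((1:ℝ)/3) := by
    rw [show ((7:ℝ)/3) = 2 + (1:ℝ)/3 by norm_num, Real.rpow_add hg, Real.rpow_two]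
  have hsqrt : Real.sqrt 3 = (3:ℝ) ^ ((1:ℝ)/2) := by
    rw [Real.sqrt_eq_rpow]
  have h37 : (3:ℝ) ^ ((7:ℝ)/6) = (3:ℝ) ^ ((1:ℝ)/2) * (3:ℝ) ^ ((2:ℝ)/3) := by
    rw [← Real.rpow_add (by norm_num)]; norm_num
  have h25 : (2:ℝ) ^ ((5:ℝ)/3) = 2 * (2:ℝ) ^ ((2:ℝ)/3) := by
    rw [show ((5:ℝ)/3) = 1 + (2:ℝ)/3 by norm_num, Real.rpow_add (by norm_num),
      Real.rpow_one]
  rw [hW, hc13, hm13, hg73, hsqrt, h37, h25, hp 0, hp 1, hp 2]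
  have hg13 : (0:ℝ) < g ^ ((1:ℝ)/3) := by positivity
  have h223 : (0:ℝ) < (2:ℝ) ^ ((2:ℝ)/3) := by positivity
  field_simp
  ring
end

section
/- Entropy extremization for BPS rotating black holes in AdS₅×S⁵: Fix G > 0, a, b ∈ [0,1) and μ₁, μ₂, μ₃ > 0; set Ξ_a = 1−a², Ξ_b = 1−b², γ₁ = μ₁+μ₂+μ₃, γ₂ = μ₁μ₂+μ₁μ₃+μ₂μ₃, γ₃ = μ₁μ₂μ₃ and 𝒥 = (1+μ₁)(1+μ₂)(1+μ₃). Assume the BPS constraint γ₁ = [ 2((a+b)+ab) + 3(1 − √(Ξ_aΞ_b)) ]/√(Ξ_aΞ_b), the regularity condition μ_I > √(Ξ_b/Ξ_a) − 1 for all I (when a ≥ b), and that R := γ₃(1+γ₁) − γ₂²/4 − ((√Ξ_a − √Ξ_b)²/√(Ξ_aΞ_b))·𝒥 > 0. Define Q_I = (π/(4G))·[ μ_I + (γ₂ − 2γ₃/μ_I)/2 ], J_ψ = (π/(4G))·[ γ₂/2 + γ₃ + (√(Ξ_a/Ξ_b) − 1)·𝒥 ], J_φ = (π/(4G))·[ γ₂/2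 + γ₃ + (√(Ξ_b/Ξ_a) − 1)·𝒥 ], and S_BH = (π²/(2G))·√R. Then there exist complex numbers Δ₁, Δ₂, Δ₃, ω₁, ω₂ with ω₁ω₂ ≠ 0 and Δ₁+Δ₂+Δ₃+ω₁+ω₂ = 1, and Λ ∈ ℂ, such that the function ℐ(Δ,ω) = (iπ²/(2G))·Δ₁Δ₂Δ₃/(ω₁ω₂) + 2πi·Σ_I Q_I Δ_I − 2πi·(J_φ ω₁ + J_ψ ω₂) has all five partial derivatives at this point equal to Λ (the Lagrange condition for a constrained critical point), and ℐ there equals S_BH. -/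
/-!
Put `P = iπ²/(2G)`, `Aᵢ = S - 2πi Qᵢ` and `B₁ = S + 2πi J_φ`, `B₂ = S + 2πi J_ψ`. If `S` is a simple
root of the cubic `A₁A₂A₃ = P B₁B₂`, the Lagrange equations of `ℐ` with multiplier `S` are solved by
`Δᵢ ∝ AⱼAₖ`, `ω₁ ∝ -P B₂`, `ω₂ ∝ -P B₁`, normalised by the constraint; since `ℐ` is homogeneous of
degree one, its value there is the multiplier `S`. For real `S` the real and imaginary parts of the
cubic are `S² = 4π²(Q₁Q₂ + Q₁Q₃ + Q₂Q₃) - (π³/G)(J_φ + J_ψ)` and the charge constraint, and both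
become polynomial identities in `μᵢ, √Ξa, √Ξb` once the charges and `S_BH` are substituted. The real
relation also gives `Re (cubic' S) = 2S² ≠ 0`, so the root is simple.
-/

open Real

section Calculus

variable {𝕜 : Type*} [NontriviallyNormedField 𝕜]

theorem deriv_mul_add_const (a b x : 𝕜) : deriv (fun z => a * z + b) x = a := by
  rw [deriv_add_const, deriv_const_mul_id]

theorem deriv_div_sub_mul_add_const (a e b : 𝕜) {x : 𝕜} (hx : x ≠ 0) :
    deriv (fun z => a / z - e * z + b) x = -a / x ^ 2 - e := by
  have h := (((hasDerivAt_inv hx).const_mul a).sub ((hasDerivAt_id' x).const_mul e)).add_const b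
  simp only [Pi.sub_apply, ← div_eq_mul_inv] at h
  rw [h.deriv]
  ring

end Calculus

section EntropyFunction

variable {𝕜 : Type*} [NontriviallyNormedField 𝕜] (P c₁ c₂ c₃ e₁ e₂ : 𝕜)

def entropyFunction (Δ₁ Δ₂ Δ₃ ω₁ ω₂ : 𝕜) : 𝕜 :=
  P * Δ₁ * Δ₂ * Δ₃ / (ω₁ * ω₂) + (c₁ * Δ₁ + c₂ * Δ₂ + c₃ * Δ₃) - (e₁ * ω₁ + e₂ * ω₂)

variable {P c₁ c₂ c₃ e₁ e₂}

theorem deriv_entropyFunction_Δ₁ (Δ₁ Δ₂ Δ₃ ω₁ ω₂ : 𝕜) :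
    deriv (fun z => entropyFunction P c₁ c₂ c₃ e₁ e₂ z Δ₂ Δ₃ ω₁ ω₂) Δ₁
      = P * Δ₂ * Δ₃ / (ω₁ * ω₂) + c₁ := by
  convert deriv_mul_add_const (P * Δ₂ * Δ₃ / (ω₁ * ω₂) + c₁)
    (c₂ * Δ₂ + c₃ * Δ₃ - (e₁ * ω₁ + e₂ * ω₂)) Δ₁ using 2
  funext z; unfold entropyFunction; ring

theorem deriv_entropyFunction_Δ₂ (Δ₁ Δ₂ Δ₃ ω₁ ω₂ : 𝕜) :
    deriv (fun z => entropyFunction P c₁ c₂ c₃ e₁ e₂ Δ₁ z Δ₃ ω₁ ω₂) Δ₂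
      = P * Δ₁ * Δ₃ / (ω₁ * ω₂) + c₂ := by
  convert deriv_mul_add_const (P * Δ₁ * Δ₃ / (ω₁ * ω₂) + c₂)
    (c₁ * Δ₁ + c₃ * Δ₃ - (e₁ * ω₁ + e₂ * ω₂)) Δ₂ using 2
  funext z; unfold entropyFunction; ring

theorem deriv_entropyFunction_Δ₃ (Δ₁ Δ₂ Δ₃ ω₁ ω₂ : 𝕜) :
    deriv (fun z => entropyFunction P c₁ c₂ c₃ e₁ e₂ Δ₁ Δ₂ z ω₁ ω₂) Δ₃
      = P * Δ₁ * Δ₂ / (ω₁ * ω₂) + c₃ := by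
  convert deriv_mul_add_const (P * Δ₁ * Δ₂ / (ω₁ * ω₂) + c₃)
    (c₁ * Δ₁ + c₂ * Δ₂ - (e₁ * ω₁ + e₂ * ω₂)) Δ₃ using 2
  funext z; unfold entropyFunction; ring

theorem deriv_entropyFunction_ω₁ (Δ₁ Δ₂ Δ₃ ω₂ : 𝕜) {ω₁ : 𝕜} (hω₁ : ω₁ ≠ 0) :
    deriv (fun z => entropyFunction P c₁ c₂ c₃ e₁ e₂ Δ₁ Δ₂ Δ₃ z ω₂) ω₁
      = -(P * Δ₁ * Δ₂ * Δ₃ / ω₂) / ω₁ ^ 2 - e₁ := by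
  convert deriv_div_sub_mul_add_const (P * Δ₁ * Δ₂ * Δ₃ / ω₂) e₁
    (c₁ * Δ₁ + c₂ * Δ₂ + c₃ * Δ₃ - e₂ * ω₂) hω₁ using 2
  funext z; unfold entropyFunction; ring

theorem deriv_entropyFunction_ω₂ (Δ₁ Δ₂ Δ₃ ω₁ : 𝕜) {ω₂ : 𝕜} (hω₂ : ω₂ ≠ 0) :
    deriv (fun z => entropyFunction P c₁ c₂ c₃ e₁ e₂ Δ₁ Δ₂ Δ₃ ω₁ z) ω₂
      = -(P * Δ₁ * Δ₂ * Δ₃ / ω₁) / ω₂ ^ 2 - e₂ := by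
  convert deriv_div_sub_mul_add_const (P * Δ₁ * Δ₂ * Δ₃ / ω₁) e₂
    (c₁ * Δ₁ + c₂ * Δ₂ + c₃ * Δ₃ - e₁ * ω₁) hω₂ using 2
  funext z; unfold entropyFunction; ring

theorem exists_critical_point_of_cubic {S : 𝕜}
    (hcubic : (S - c₁) * (S - c₂) * (S - c₃) = P * (S + e₁) * (S + e₂))
    (hP : P ≠ 0) (he₁ : S + e₁ ≠ 0) (he₂ : S + e₂ ≠ 0)
    (hsimple : (S - c₁) * (S - c₂) + (S - c₁) * (S - c₃) + (S - c₂) * (S - c₃)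
      - P * ((S + e₁) + (S + e₂)) ≠ 0) :
    ∃ Δ₁ Δ₂ Δ₃ ω₁ ω₂ : 𝕜, ω₁ * ω₂ ≠ 0 ∧ Δ₁ + Δ₂ + Δ₃ + ω₁ + ω₂ = 1 ∧
      deriv (fun z => entropyFunction P c₁ c₂ c₃ e₁ e₂ z Δ₂ Δ₃ ω₁ ω₂) Δ₁ = S ∧
      deriv (fun z => entropyFunction P c₁ c₂ c₃ e₁ e₂ Δ₁ z Δ₃ ω₁ ω₂) Δ₂ = S ∧
      deriv (fun z => entropyFunction P c₁ c₂ c₃ e₁ e₂ Δ₁ Δ₂ z ω₁ ω₂) Δ₃ = S ∧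
      deriv (fun z => entropyFunction P c₁ c₂ c₃ e₁ e₂ Δ₁ Δ₂ Δ₃ z ω₂) ω₁ = S ∧
      deriv (fun z => entropyFunction P c₁ c₂ c₃ e₁ e₂ Δ₁ Δ₂ Δ₃ ω₁ z) ω₂ = S ∧
      entropyFunction P c₁ c₂ c₃ e₁ e₂ Δ₁ Δ₂ Δ₃ ω₁ ω₂ = S := by
  set A₁ := S - c₁
  set A₂ := S - c₂
  set A₃ := S - c₃
  set B₁ := S + e₁
  set B₂ := S + e₂
  set U := A₁ * A₂ + A₁ * A₃ + A₂ * A₃ - P * (B₁ + B₂)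
  have hω₁ : -(P * B₂) / U ≠ 0 := div_ne_zero (neg_ne_zero.2 (mul_ne_zero hP he₂)) hsimple
  have hω₂ : -(P * B₁) / U ≠ 0 := div_ne_zero (neg_ne_zero.2 (mul_ne_zero hP he₁)) hsimple
  refine ⟨A₂ * A₃ / U, A₁ * A₃ / U, A₁ * A₂ / U, -(P * B₂) / U, -(P * B₁) / U,
    mul_ne_zero hω₁ hω₂, ?_, ?_, ?_, ?_, ?_, ?_, ?_⟩
  · field_simp
    ring
  · rw [deriv_entropyFunction_Δ₁]
    field_simp
    linear_combination A₁ * hcubic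
  · rw [deriv_entropyFunction_Δ₂]
    field_simp
    linear_combination A₂ * hcubic
  · rw [deriv_entropyFunction_Δ₃]
    field_simp
    linear_combination A₃ * hcubic
  · rw [deriv_entropyFunction_ω₁ _ _ _ _ hω₁]
    field_simp
    linear_combination (A₁ * A₂ * A₃ + P * B₁ * B₂) * hcubic
  · rw [deriv_entropyFunction_ω₂ _ _ _ _ hω₂]
    field_simp
    linear_combination (A₁ * A₂ * A₃ + P * B₁ * B₂) * hcubic
  · unfold entropyFunction
    field_simp
    linear_combination (A₁ * A₂ * A₃ - 2 * P * B₁ * B₂) * hcubic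

end EntropyFunction

section BPSBlackHole

open Complex

theorem bps_entropy_relations {G x y μ₁ μ₂ μ₃ γ₁ γ₂ γ₃ J Q₁ Q₂ Q₃ Jφ Jψ S : ℝ}
    (hG : G ≠ 0) (hx : x ≠ 0) (hy : y ≠ 0) (hμ₁ : μ₁ ≠ 0) (hμ₂ : μ₂ ≠ 0) (hμ₃ : μ₃ ≠ 0)
    (hγ₁ : γ₁ = μ₁ + μ₂ + μ₃) (hγ₂ : γ₂ = μ₁ * μ₂ + μ₁ * μ₃ + μ₂ * μ₃)
    (hγ₃ : γ₃ = μ₁ * μ₂ * μ₃) (hJ : J = (1 + μ₁) * (1 + μ₂) * (1 + μ₃))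
    (hQ₁ : Q₁ = π / (4 * G) * (μ₁ + (γ₂ - 2 * γ₃ / μ₁) / 2))
    (hQ₂ : Q₂ = π / (4 * G) * (μ₂ + (γ₂ - 2 * γ₃ / μ₂) / 2))
    (hQ₃ : Q₃ = π / (4 * G) * (μ₃ + (γ₂ - 2 * γ₃ / μ₃) / 2))
    (hJψ : Jψ = π / (4 * G) * (γ₂ / 2 + γ₃ + (x / y - 1) * J))
    (hJφ : Jφ = π / (4 * G) * (γ₂ / 2 + γ₃ + (y / x - 1) * J))
    (hS : S ^ 2 = (π ^ 2 / (2 * G)) ^ 2 *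
      (γ₃ * (1 + γ₁) - γ₂ ^ 2 / 4 - (x - y) ^ 2 / (x * y) * J)) :
    G * S ^ 2 = 4 * π ^ 2 * G * (Q₁ * Q₂ + Q₁ * Q₃ + Q₂ * Q₃) - π ^ 3 * (Jφ + Jψ) ∧
    S ^ 2 * (4 * π * G * (Q₁ + Q₂ + Q₃) + π ^ 2)
      = 16 * π ^ 3 * G * (Q₁ * Q₂ * Q₃) + 4 * π ^ 4 * (Jφ * Jψ) := by
  subst hγ₁ hγ₂ hγ₃ hJ hQ₁ hQ₂ hQ₃ hJψ hJφ
  rw [hS]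
  constructor
  · field_simp
    ring
  · field_simp
    ring

theorem entropy_cubic_of_relations {G S Q₁ Q₂ Q₃ J₁ J₂ : ℝ} (hG : G ≠ 0)
    (hRe : G * S ^ 2 = 4 * π ^ 2 * G * (Q₁ * Q₂ + Q₁ * Q₃ + Q₂ * Q₃) - π ^ 3 * (J₁ + J₂))
    (hIm : S ^ 2 * (4 * π * G * (Q₁ + Q₂ + Q₃) + π ^ 2)
      = 16 * π ^ 3 * G * (Q₁ * Q₂ * Q₃) + 4 * π ^ 4 * (J₁ * J₂)) :
    (S - 2 * π * I * Q₁) * (S - 2 * π * I * Q₂) * (S - 2 * π * I * Q₃)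
      = I * π ^ 2 / (2 * G) * (S + 2 * π * I * J₁) * (S + 2 * π * I * J₂) := by
  have hGC : (G : ℂ) ≠ 0 := ofReal_ne_zero.2 hG
  have hReC := congrArg ofReal hRe
  have hImC := congrArg ofReal hIm
  push_cast at hReC hImC
  field_simp
  linear_combination 2 * (S : ℂ) * hReC - I * hImC
    + (8 * G * S * π ^ 2 * (Q₁ * Q₂ + Q₁ * Q₃ + Q₂ * Q₃) - 16 * G * π ^ 3 * I * (Q₁ * Q₂ * Q₃)
      - 2 * S * π ^ 3 * (J₁ + J₂) - 4 * π ^ 4 * I * (J₁ * J₂)) * I_sq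

theorem ofReal_add_two_pi_I_mul_ne_zero {S : ℝ} (hS : S ≠ 0) (t : ℝ) :
    (S : ℂ) + 2 * π * I * t ≠ 0 := by
  intro h
  simpa [hS] using congrArg re h

theorem entropy_cubic_deriv_ne_zero {G S Q₁ Q₂ Q₃ J₁ J₂ : ℝ} (hG : G ≠ 0) (hS : S ≠ 0)
    (hRe : G * S ^ 2 = 4 * π ^ 2 * G * (Q₁ * Q₂ + Q₁ * Q₃ + Q₂ * Q₃) - π ^ 3 * (J₁ + J₂)) :
    (S - 2 * π * I * Q₁) * (S - 2 * π * I * Q₂) + (S - 2 * π * I * Q₁) * (S - 2 * π * I * Q₃)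
      + (S - 2 * π * I * Q₂) * (S - 2 * π * I * Q₃)
      - I * π ^ 2 / (2 * G) * ((S + 2 * π * I * J₁) + (S + 2 * π * I * J₂)) ≠ 0 := by
  have hE : (S - 2 * π * I * Q₁) * (S - 2 * π * I * Q₂)
      + (S - 2 * π * I * Q₁) * (S - 2 * π * I * Q₃) + (S - 2 * π * I * Q₂) * (S - 2 * π * I * Q₃)
      - I * π ^ 2 / (2 * G) * ((S + 2 * π * I * J₁) + (S + 2 * π * I * J₂))
      = ((2 * S ^ 2 : ℝ) : ℂ) - I * ((4 * π * S * (Q₁ + Q₂ + Q₃) + π ^ 2 * S / G : ℝ) : ℂ) := by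
    have hGC : (G : ℂ) ≠ 0 := ofReal_ne_zero.2 hG
    have hReC := congrArg ofReal hRe
    push_cast at hReC ⊢
    field_simp
    linear_combination 2 * hReC
      + (8 * π ^ 2 * G * (Q₁ * Q₂ + Q₁ * Q₃ + Q₂ * Q₃) - 2 * π ^ 3 * (J₁ + J₂)) * I_sq
  rw [hE]
  intro h
  have h2 := congrArg re h
  simp only [sub_re, mul_re, I_re, I_im, ofReal_re, ofReal_im, zero_mul,
    zero_re] at h2
  exact hS (by simpa using h2)

end BPSBlackHole

theorem stmt18_general (G a b μ1 μ2 μ3 : ℝ)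
    (hG : 0 < G) (ha0 : 0 ≤ a) (ha1 : a < 1) (hb0 : 0 ≤ b) (hb1 : b < 1)
    (hμ1 : 0 < μ1) (hμ2 : 0 < μ2) (hμ3 : 0 < μ3)
    (Ξa Ξb γ1 γ2 γ3 J R : ℝ)
    (hΞa : Ξa = 1 - a ^ 2) (hΞb : Ξb = 1 - b ^ 2)
    (hγ1 : γ1 = μ1 + μ2 + μ3) (hγ2 : γ2 = μ1 * μ2 + μ1 * μ3 + μ2 * μ3)
    (hγ3 : γ3 = μ1 * μ2 * μ3)
    (hJ : J = (1 + μ1) * (1 + μ2) * (1 + μ3))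
    (hR : R = γ3 * (1 + γ1) - γ2 ^ 2 / 4
      - (Real.sqrt Ξa - Real.sqrt Ξb) ^ 2 / Real.sqrt (Ξa * Ξb) * J)
    (hRpos : 0 < R)
    (Q1 Q2 Q3 Jψ Jφ SBH : ℝ)
    (hQ1 : Q1 = π / (4 * G) * (μ1 + (γ2 - 2 * γ3 / μ1) / 2))
    (hQ2 : Q2 = π / (4 * G) * (μ2 + (γ2 - 2 * γ3 / μ2) / 2))
    (hQ3 : Q3 = π / (4 * G) * (μ3 + (γ2 - 2 * γ3 / μ3) / 2))
    (hJψ : Jψ = π / (4 * G) * (γ2 / 2 + γ3 + (Real.sqrt (Ξa / Ξb) - 1) * J))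
    (hJφ : Jφ = π / (4 * G) * (γ2 / 2 + γ3 + (Real.sqrt (Ξb / Ξa) - 1) * J))
    (hSBH : SBH = π ^ 2 / (2 * G) * Real.sqrt R)
    (Ifn : ℂ → ℂ → ℂ → ℂ → ℂ → ℂ)
    (hIfn : ∀ d1 d2 d3 w1 w2, Ifn d1 d2 d3 w1 w2 =
      Complex.I * (π : ℂ) ^ 2 / (2 * (G : ℂ)) * d1 * d2 * d3 / (w1 * w2)
      + 2 * (π : ℂ) * Complex.I * ((Q1 : ℂ) * d1 + (Q2 : ℂ) * d2 + (Q3 : ℂ) * d3)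
      - 2 * (π : ℂ) * Complex.I * ((Jφ : ℂ) * w1 + (Jψ : ℂ) * w2)) :
    ∃ (d1 d2 d3 w1 w2 Λ : ℂ), w1 * w2 ≠ 0 ∧ d1 + d2 + d3 + w1 + w2 = 1 ∧
      deriv (fun z => Ifn z d2 d3 w1 w2) d1 = Λ ∧
      deriv (fun z => Ifn d1 z d3 w1 w2) d2 = Λ ∧
      deriv (fun z => Ifn d1 d2 z w1 w2) d3 = Λ ∧
      deriv (fun z => Ifn d1 d2 d3 z w2) w1 = Λ ∧
      deriv (fun z => Ifn d1 d2 d3 w1 z) w2 = Λ ∧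
      Ifn d1 d2 d3 w1 w2 = (SBH : ℂ) := by
  have hΞa0 : 0 < Ξa := by rw [hΞa]; nlinarith
  have hΞb0 : 0 < Ξb := by rw [hΞb]; nlinarith
  have hS : 0 < SBH := by rw [hSBH]; exact mul_pos (by positivity) (Real.sqrt_pos.2 hRpos)
  have hS2 : SBH ^ 2 = (π ^ 2 / (2 * G)) ^ 2 * R := by
    rw [hSBH, mul_pow, Real.sq_sqrt hRpos.le]
  rw [Real.sqrt_div hΞa0.le] at hJψ
  rw [Real.sqrt_div hΞb0.le] at hJφ
  rw [hR, Real.sqrt_mul hΞa0.le] at hS2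
  obtain ⟨hRe, hIm⟩ := bps_entropy_relations hG.ne' (Real.sqrt_pos.2 hΞa0).ne'
    (Real.sqrt_pos.2 hΞb0).ne' hμ1.ne' hμ2.ne' hμ3.ne' hγ1 hγ2 hγ3 hJ hQ1 hQ2 hQ3 hJψ hJφ hS2
  have hIfn' : Ifn = entropyFunction (Complex.I * π ^ 2 / (2 * G)) (2 * π * Complex.I * Q1)
      (2 * π * Complex.I * Q2) (2 * π * Complex.I * Q3) (2 * π * Complex.I * Jφ)
      (2 * π * Complex.I * Jψ) := by
    funext d1 d2 d3 w1 w2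
    rw [hIfn, entropyFunction]
    ring
  subst hIfn'
  obtain ⟨d1, d2, d3, w1, w2, hcrit⟩ := exists_critical_point_of_cubic
    (entropy_cubic_of_relations hG.ne' hRe hIm) (by simp [hG.ne', pi_ne_zero])
    (ofReal_add_two_pi_I_mul_ne_zero hS.ne' Jφ) (ofReal_add_two_pi_I_mul_ne_zero hS.ne' Jψ)
    (entropy_cubic_deriv_ne_zero hG.ne' hS.ne' hRe)
  exact ⟨d1, d2, d3, w1, w2, SBH, hcrit⟩

/-- Entropy extremization for BPS rotating black holes in AdS₅×S⁵: for a
supersymmetric black hole labeled by `(μ₁,μ₂,μ₃,a,b)` subject to the BPS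
constraint, with electric charges `Q_I`, angular momenta `J_φ, J_ψ` and
entropy `S_BH = (π²/(2G))√R`, there exists a constrained critical point
(complex chemical potentials with `Δ₁+Δ₂+Δ₃+ω₁+ω₂ = 1`, all five partial
derivatives equal to the Lagrange multiplier `Λ`) of
`ℐ = (iπ²/(2G))Δ₁Δ₂Δ₃/(ω₁ω₂) + 2πiΣQ_IΔ_I − 2πi(J_φω₁ + J_ψω₂)`
at which `ℐ = S_BH`. -/
theorem stmt18 (G a b μ1 μ2 μ3 : ℝ)
    (hG : 0 < G) (ha0 : 0 ≤ a) (ha1 : a < 1) (hb0 : 0 ≤ b) (hb1 : b < 1)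
    (hμ1 : 0 < μ1) (hμ2 : 0 < μ2) (hμ3 : 0 < μ3)
    (Ξa Ξb γ1 γ2 γ3 J R : ℝ)
    (hΞa : Ξa = 1 - a ^ 2) (hΞb : Ξb = 1 - b ^ 2)
    (hγ1 : γ1 = μ1 + μ2 + μ3) (hγ2 : γ2 = μ1 * μ2 + μ1 * μ3 + μ2 * μ3)
    (hγ3 : γ3 = μ1 * μ2 * μ3)
    (hJ : J = (1 + μ1) * (1 + μ2) * (1 + μ3))
    (hBPS : γ1 = (2 * ((a + b) + a * b) + 3 * (1 - Real.sqrt (Ξa * Ξb)))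
      / Real.sqrt (Ξa * Ξb))
    (hab : b ≤ a)
    (hreg1 : Real.sqrt (Ξb / Ξa) - 1 < μ1)
    (hreg2 : Real.sqrt (Ξb / Ξa) - 1 < μ2)
    (hreg3 : Real.sqrt (Ξb / Ξa) - 1 < μ3)
    (hR : R = γ3 * (1 + γ1) - γ2 ^ 2 / 4
      - (Real.sqrt Ξa - Real.sqrt Ξb) ^ 2 / Real.sqrt (Ξa * Ξb) * J)
    (hRpos : 0 < R)
    (Q1 Q2 Q3 Jψ Jφ SBH : ℝ)
    (hQ1 : Q1 = π / (4 * G) * (μ1 + (γ2 - 2 * γ3 / μ1) / 2))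
    (hQ2 : Q2 = π / (4 * G) * (μ2 + (γ2 - 2 * γ3 / μ2) / 2))
    (hQ3 : Q3 = π / (4 * G) * (μ3 + (γ2 - 2 * γ3 / μ3) / 2))
    (hJψ : Jψ = π / (4 * G) * (γ2 / 2 + γ3 + (Real.sqrt (Ξa / Ξb) - 1) * J))
    (hJφ : Jφ = π / (4 * G) * (γ2 / 2 + γ3 + (Real.sqrt (Ξb / Ξa) - 1) * J))
    (hSBH : SBH = π ^ 2 / (2 * G) * Real.sqrt R)
    (Ifn : ℂ → ℂ → ℂ → ℂ → ℂ → ℂ)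
    (hIfn : ∀ d1 d2 d3 w1 w2, Ifn d1 d2 d3 w1 w2 =
      Complex.I * (π : ℂ) ^ 2 / (2 * (G : ℂ)) * d1 * d2 * d3 / (w1 * w2)
      + 2 * (π : ℂ) * Complex.I * ((Q1 : ℂ) * d1 + (Q2 : ℂ) * d2 + (Q3 : ℂ) * d3)
      - 2 * (π : ℂ) * Complex.I * ((Jφ : ℂ) * w1 + (Jψ : ℂ) * w2)) :
    ∃ (d1 d2 d3 w1 w2 Λ : ℂ), w1 * w2 ≠ 0 ∧ d1 + d2 + d3 + w1 + w2 = 1 ∧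
      deriv (fun z => Ifn z d2 d3 w1 w2) d1 = Λ ∧
      deriv (fun z => Ifn d1 z d3 w1 w2) d2 = Λ ∧
      deriv (fun z => Ifn d1 d2 z w1 w2) d3 = Λ ∧
      deriv (fun z => Ifn d1 d2 d3 z w2) w1 = Λ ∧
      deriv (fun z => Ifn d1 d2 d3 w1 z) w2 = Λ ∧
      Ifn d1 d2 d3 w1 w2 = (SBH : ℂ) :=
  stmt18_general G a b μ1 μ2 μ3 hG ha0 ha1 hb0 hb1 hμ1 hμ2 hμ3 Ξa Ξb γ1 γ2 γ3 J R hΞa hΞb hγ1 hγ2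
    hγ3 hJ hR hRpos Q1 Q2 Q3 Jψ Jφ SBH hQ1 hQ2 hQ3 hJψ hJφ hSBH Ifn hIfn
end

section
/- Four-dimensional attractor equations for the dimensionally reduced equal-angular-momenta AdS₅ black hole: Work in units g = 1. Let a ∈ (0,1) and μ₁, μ₂, μ₃ > 0; set Ξ = 1 − a², γ₁ = μ₁+μ₂+μ₃, γ₂ = μ₁μ₂+μ₁μ₃+μ₂μ₃, γ₃ = μ₁μ₂μ₃, and assume the BPS constraint γ₁ = [ 2(2a + a²) + 3(1 − Ξ) ]/Ξ and υ := 1 + γ₁ − γ₂²/(4γ₃) > 0. Define, for I = 1,2,3, f_I = (μ_I − γ₁)/4 + γ₃/(4μ_I²), the complex scalars z_I = −f_I + (i/2)·√(υγ₃)/μ_I, and the charges q₀ = (γ₂ + 2γ₃)/8, q_I = −(1/4)·[ μ_I + (γ₂ − 2γ₃/μ_I)/2 ]. Then the attractor equations q_I − q₀ = ( 2 + 1/z_I )·z₁z₂z₃ hold for I = 1, 2, 3. -/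
open Real

private lemma aux19 (x1 y1 x2 y2 x3 y3 A : ℝ)
    (hre : A = (x1*x2*x3 - x1*(y2*y3) - (y1*y3)*x2 - (y1*y2)*x3)*2 + (x2*x3 - y2*y3))
    (him : (0:ℝ) = (y1*(x2*x3) + x1*(y2*x3) + x1*(x2*y3) - y1*y2*y3)*2 + (x2*y3 + y2*x3)) :
    ((A:ℝ):ℂ) = 2*(((x1:ℝ):ℂ) + (y1:ℝ)*Complex.I) * (((x2:ℝ):ℂ) + (y2:ℝ)*Complex.I)
        * (((x3:ℝ):ℂ) + (y3:ℝ)*Complex.I)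
      + (((x2:ℝ):ℂ) + (y2:ℝ)*Complex.I) * (((x3:ℝ):ℂ) + (y3:ℝ)*Complex.I) := by
  have hI : (Complex.I)^2 = -1 := Complex.I_sq
  have hreC := congrArg (Complex.ofReal) hre
  have himC := congrArg (Complex.ofReal) him
  push_cast at hreC himC
  linear_combination hreC + Complex.I*himC
    - ((2*((x1:ℂ)*(y2:ℂ)*(y3:ℂ) + (y1:ℂ)*(y3:ℂ)*(x2:ℂ) + (y1:ℂ)*(y2:ℂ)*(x3:ℂ)) + (y2:ℂ)*(y3:ℂ))
       + (2*(y1:ℂ)*(y2:ℂ)*(y3:ℂ))*Complex.I) * hI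


set_option maxHeartbeats 4000000 in
/-- Four-dimensional attractor equations for the dimensionally reduced
equal-angular-momenta AdS₅ black hole (units `g = 1`): with the horizon
scalars `z_I = −f_I + (i/2)√(υγ₃)/μ_I` and the charges `q₀`, `q_I` obtained
from the Kaluza-Klein reduction, the supersymmetric attractor equations
`q_I − q₀ = (2 + 1/z_I)·z₁z₂z₃` hold for `I = 1,2,3`. -/
theorem stmt19 (a μ1 μ2 μ3 : ℝ) (ha0 : 0 < a) (ha1 : a < 1)
    (hμ1 : 0 < μ1) (hμ2 : 0 < μ2) (hμ3 : 0 < μ3)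
    (Ξ γ1 γ2 γ3 υ : ℝ)
    (hΞ : Ξ = 1 - a ^ 2)
    (hγ1 : γ1 = μ1 + μ2 + μ3) (hγ2 : γ2 = μ1 * μ2 + μ1 * μ3 + μ2 * μ3)
    (hγ3 : γ3 = μ1 * μ2 * μ3)
    (hBPS : γ1 = (2 * (2 * a + a ^ 2) + 3 * (1 - Ξ)) / Ξ)
    (hυ : υ = 1 + γ1 - γ2 ^ 2 / (4 * γ3)) (hυpos : 0 < υ)
    (f1 f2 f3 : ℝ)
    (hf1 : f1 = (μ1 - γ1) / 4 + γ3 / (4 * μ1 ^ 2))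
    (hf2 : f2 = (μ2 - γ1) / 4 + γ3 / (4 * μ2 ^ 2))
    (hf3 : f3 = (μ3 - γ1) / 4 + γ3 / (4 * μ3 ^ 2))
    (z1 z2 z3 : ℂ)
    (hz1 : z1 = -(f1 : ℂ) + Complex.I / 2 * ((Real.sqrt (υ * γ3) / μ1 : ℝ) : ℂ))
    (hz2 : z2 = -(f2 : ℂ) + Complex.I / 2 * ((Real.sqrt (υ * γ3) / μ2 : ℝ) : ℂ))
    (hz3 : z3 = -(f3 : ℂ) + Complex.I / 2 * ((Real.sqrt (υ * γ3) / μ3 : ℝ) : ℂ))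
    (q0 q1 q2 q3 : ℝ)
    (hq0 : q0 = (γ2 + 2 * γ3) / 8)
    (hq1 : q1 = -(1 / 4) * (μ1 + (γ2 - 2 * γ3 / μ1) / 2))
    (hq2 : q2 = -(1 / 4) * (μ2 + (γ2 - 2 * γ3 / μ2) / 2))
    (hq3 : q3 = -(1 / 4) * (μ3 + (γ2 - 2 * γ3 / μ3) / 2)) :
    ((q1 - q0 : ℝ) : ℂ) = (2 + 1 / z1) * (z1 * z2 * z3) ∧
    ((q2 - q0 : ℝ) : ℂ) = (2 + 1 / z2) * (z1 * z2 * z3) ∧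
    ((q3 - q0 : ℝ) : ℂ) = (2 + 1 / z3) * (z1 * z2 * z3) := by
  have hμ1' : μ1 ≠ 0 := hμ1.ne'
  have hμ2' : μ2 ≠ 0 := hμ2.ne'
  have hμ3' : μ3 ≠ 0 := hμ3.ne'
  have hγ3pos : 0 < γ3 := by rw [hγ3]; positivity
  set s := Real.sqrt (υ * γ3) with hsdef
  have hs : s ^ 2 = υ * γ3 := Real.sq_sqrt (le_of_lt (mul_pos hυpos hγ3pos))
  have hspos : 0 < s := Real.sqrt_pos.mpr (mul_pos hυpos hγ3pos)
  have hz1' : z1 = ((-f1 : ℝ) : ℂ) + ((s/μ1/2 : ℝ) : ℂ) * Complex.I := by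
    rw [hz1]; push_cast; ring
  have hz2' : z2 = ((-f2 : ℝ) : ℂ) + ((s/μ2/2 : ℝ) : ℂ) * Complex.I := by
    rw [hz2]; push_cast; ring
  have hz3' : z3 = ((-f3 : ℝ) : ℂ) + ((s/μ3/2 : ℝ) : ℂ) * Complex.I := by
    rw [hz3]; push_cast; ring
  have hz1ne : z1 ≠ 0 := by
    rw [hz1']; intro h
    have h' := congrArg Complex.im h
    simp at h'
    rcases h' with h' | h'
    · exact hspos.ne' h'
    · exact hμ1' h'
  have hz2ne : z2 ≠ 0 := by
    rw [hz2']; intro h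
    have h' := congrArg Complex.im h
    simp at h'
    rcases h' with h' | h'
    · exact hspos.ne' h'
    · exact hμ2' h'
  have hz3ne : z3 ≠ 0 := by
    rw [hz3']; intro h
    have h' := congrArg Complex.im h
    simp at h'
    rcases h' with h' | h'
    · exact hspos.ne' h'
    · exact hμ3' h'
  have e12 : (s/μ1/2) * (s/μ2/2) = υ * γ3 / (4*(μ1*μ2)) := by
    rw [show (s/μ1/2) * (s/μ2/2) = s^2 / (4*(μ1*μ2)) from by ring, hs]
  have e13 : (s/μ1/2) * (s/μ3/2) = υ * γ3 / (4*(μ1*μ3)) := by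
    rw [show (s/μ1/2) * (s/μ3/2) = s^2 / (4*(μ1*μ3)) from by ring, hs]
  have e21 : (s/μ2/2) * (s/μ1/2) = υ * γ3 / (4*(μ2*μ1)) := by
    rw [show (s/μ2/2) * (s/μ1/2) = s^2 / (4*(μ2*μ1)) from by ring, hs]
  have e23 : (s/μ2/2) * (s/μ3/2) = υ * γ3 / (4*(μ2*μ3)) := by
    rw [show (s/μ2/2) * (s/μ3/2) = s^2 / (4*(μ2*μ3)) from by ring, hs]
  have e31 : (s/μ3/2) * (s/μ1/2) = υ * γ3 / (4*(μ3*μ1)) := by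
    rw [show (s/μ3/2) * (s/μ1/2) = s^2 / (4*(μ3*μ1)) from by ring, hs]
  have e32 : (s/μ3/2) * (s/μ2/2) = υ * γ3 / (4*(μ3*μ2)) := by
    rw [show (s/μ3/2) * (s/μ2/2) = s^2 / (4*(μ3*μ2)) from by ring, hs]
  have e123 : (s/μ1/2) * (s/μ2/2) * (s/μ3/2) = υ * γ3 * s / (8*(μ1*μ2*μ3)) := by
    rw [show (s/μ1/2) * (s/μ2/2) * (s/μ3/2) = s^2 * s / (8*(μ1*μ2*μ3)) from by ring, hs]
  have e213 : (s/μ2/2) * (s/μ1/2) * (s/μ3/2) = υ * γ3 * s / (8*(μ1*μ2*μ3)) := by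
    rw [show (s/μ2/2) * (s/μ1/2) * (s/μ3/2) = s^2 * s / (8*(μ1*μ2*μ3)) from by ring, hs]
  have e312 : (s/μ3/2) * (s/μ1/2) * (s/μ2/2) = υ * γ3 * s / (8*(μ1*μ2*μ3)) := by
    rw [show (s/μ3/2) * (s/μ1/2) * (s/μ2/2) = s^2 * s / (8*(μ1*μ2*μ3)) from by ring, hs]
  subst hγ1 hγ2 hγ3 hυ hf1 hf2 hf3 hq0 hq1 hq2 hq3
  refine ⟨?_, ?_, ?_⟩
  · have key := aux19 (-((μ1 - (μ1+μ2+μ3))/4 + μ1*μ2*μ3/(4*μ1^2))) (s/μ1/2) (-((μ2 - (μ1+μ2+μ3))/4 + μ1*μ2*μ3/(4*μ2^2))) (s/μ2/2) (-((μ3 - (μ1+μ2+μ3))/4 + μ1*μ2*μ3/(4*μ3^2))) (s/μ3/2) (-(1/4) * (μ1 + (μ1*μ2 + μ1*μ3 + μ2*μ3 - 2*(μ1*μ2*μ3)/μ1)/2) - (μ1*μ2 + μ1*μ3 + μ2*μ3 + 2*(μ1*μ2*μ3))/8)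
      (by rw [e23, e13, e12]; field_simp <;> ring)
      (by rw [e123]; field_simp <;> ring)
    rw [show ((2:ℂ) + 1/z1) * (z1*z2*z3) = 2*z1*z2*z3 + z2*z3 from by
      field_simp <;> ring, hz1', hz2', hz3']
    exact key
  · have key := aux19 (-((μ2 - (μ1+μ2+μ3))/4 + μ1*μ2*μ3/(4*μ2^2))) (s/μ2/2) (-((μ1 - (μ1+μ2+μ3))/4 + μ1*μ2*μ3/(4*μ1^2))) (s/μ1/2) (-((μ3 - (μ1+μ2+μ3))/4 + μ1*μ2*μ3/(4*μ3^2))) (s/μ3/2) (-(1/4) * (μ2 + (μ1*μ2 + μ1*μ3 + μ2*μ3 - 2*(μ1*μ2*μ3)/μ2)/2) - (μ1*μ2 + μ1*μ3 + μ2*μ3 + 2*(μ1*μ2*μ3))/8)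
      (by rw [e13, e23, e21]; field_simp <;> ring)
      (by rw [e213]; field_simp <;> ring)
    rw [show ((2:ℂ) + 1/z2) * (z1*z2*z3) = 2*z2*z1*z3 + z1*z3 from by
      field_simp <;> ring, hz1', hz2', hz3']
    exact key
  · have key := aux19 (-((μ3 - (μ1+μ2+μ3))/4 + μ1*μ2*μ3/(4*μ3^2))) (s/μ3/2) (-((μ1 - (μ1+μ2+μ3))/4 + μ1*μ2*μ3/(4*μ1^2))) (s/μ1/2) (-((μ2 - (μ1+μ2+μ3))/4 + μ1*μ2*μ3/(4*μ2^2))) (s/μ2/2) (-(1/4) * (μ3 + (μ1*μ2 + μ1*μ3 + μ2*μ3 - 2*(μ1*μ2*μ3)/μ3)/2) - (μ1*μ2 + μ1*μ3 + μ2*μ3 + 2*(μ1*μ2*μ3))/8)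
      (by rw [e12, e32, e31]; field_simp <;> ring)
      (by rw [e312]; field_simp <;> ring)
    rw [show ((2:ℂ) + 1/z3) * (z1*z2*z3) = 2*z3*z1*z2 + z1*z2 from by
      field_simp <;> ring, hz1', hz2', hz3']
    exact key
end
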